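/- Let f : ℝ → ℝ be nonnegative, lower semicontinuous, and Lebesgue integrable, and suppose there exists x* ∈ ℝ such that f is nondecreasing on (−∞, x*] and nonincreasing on [x*, ∞). Then for every odd integer k ≥ 1, |∫_ℝ f(x)·err(x)^k dx| ≤ (1/(k+1)) · f(x*) · δ^{k+1}. -/

import Mathlib

/-!
For odd `k` and `d x = infDist x F`, the right derivative of `G = -d ^ (k + 1) / (k + 1)` at `x`
is `(r x - x) ^ k`, where `r` rounds to nearest with ties broken upwards: rounding down gives
`err = -d` and `(-d) ^ k = -d ^ k`. Ties happen only at gap midpoints, a countable set, so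
`err ^ k` integrates to `G β - G α` over every `(α, β)`, and `|G β - G α| ≤ δ ^ (k + 1) / (k + 1)`
since `0 ≤ d ≤ δ`. By the layer-cake formula `∫ f err ^ k = ∫_{0 < u} ∫_{u < f} err ^ k`; for a
unimodal lower semicontinuous integrable `f` each superlevel set `{u < f}` is such an open
interval, and it is empty once `u ≥ f x*`.
-/

open MeasureTheory

/-- Greatest element of `F` below `x`. -/
noncomputable def flF (F : Set ℝ) (x : ℝ) : ℝ := sSup (F ∩ Set.Iic x)

/-- Least element of `F` above `x`. -/
noncomputable def ceF (F : Set ℝ) (x : ℝ) : ℝ := sInf (F ∩ Set.Ici x)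

open Set Metric Filter Topology

lemma hasFDerivAt_infDist_pow_of_mem {E : Type*} [NormedAddCommGroup E] [NormedSpace ℝ E]
    {s : Set E} {x : E} (hx : x ∈ s) {n : ℕ} (hn : 1 < n) :
    HasFDerivAt (fun y => infDist y s ^ n) (0 : E →L[ℝ] ℝ) x := by
  refine .of_isLittleO <| (Asymptotics.IsBigO.of_bound 1 ?_).trans_isLittleO
    (Asymptotics.isLittleO_pow_sub_sub x hn)
  filter_upwards with y
  rw [infDist_zero_of_mem hx, zero_pow (by omega), zero_apply, sub_zero, sub_zero,
    one_mul, norm_pow, norm_pow, norm_norm, Real.norm_of_nonneg infDist_nonneg, ← dist_eq_norm]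
  exact pow_le_pow_left₀ infDist_nonneg (infDist_le_dist_of_mem hx) n

lemma hasDerivWithinAt_neg_min_pow_div {a b x : ℝ} {k : ℕ} (hk : Odd k) :
    HasDerivWithinAt (fun y => -min (y - a) (b - y) ^ (k + 1) / (k + 1))
      (((if x - a < b - x then a else b) - x) ^ k) (Ioi x) x := by
  split_ifs with h
  · have hd : HasDerivAt (fun y => -(y - a) ^ (k + 1) / (k + 1)) ((a - x) ^ k) x := by
      refine (((hasDerivAt_id x).sub_const a).pow (k + 1)).neg.div_const ((k : ℝ) + 1)
        |>.congr_deriv ?_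
      rw [← neg_sub x a, hk.neg_pow]
      field_simp
      simp
    refine (hd.congr_of_eventuallyEq ?_).hasDerivWithinAt
    filter_upwards [(show Continuous fun y => y - a by fun_prop).continuousAt.eventually_lt
      (show Continuous fun y => b - y by fun_prop).continuousAt h] with y hy
    rw [min_eq_left hy.le]
  · have hd : HasDerivAt (fun y => -(b - y) ^ (k + 1) / (k + 1)) ((b - x) ^ k) x := by
      refine (((hasDerivAt_id x).const_sub b).pow (k + 1)).neg.div_const ((k : ℝ) + 1)
        |>.congr_deriv ?_
      field_simp
      simp
    refine hd.hasDerivWithinAt.congr (fun y hy => ?_) ?_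
    · rw [min_eq_right (by linarith [hy.out])]
    · rw [min_eq_right (not_lt.1 h)]

section Rounding

variable {F : Set ℝ} {x y z : ℝ} {k : ℕ}

lemma flF_mem (hF : IsClosed F) (hx : ∃ z ∈ F, z ≤ x) : flF F x ∈ F ∩ Iic x :=
  (hF.inter isClosed_Iic).csSup_mem hx ⟨x, fun _ h => h.2⟩

lemma ceF_mem (hF : IsClosed F) (hx : ∃ z ∈ F, x ≤ z) : ceF F x ∈ F ∩ Ici x :=
  (hF.inter isClosed_Ici).csInf_mem hx ⟨x, fun _ h => h.2⟩

lemma le_flF (hz : z ∈ F) (hzx : z ≤ x) : z ≤ flF F x :=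
  le_csSup ⟨x, fun _ h => h.2⟩ ⟨hz, hzx⟩

lemma ceF_le (hz : z ∈ F) (hxz : x ≤ z) : ceF F x ≤ z :=
  csInf_le ⟨x, fun _ h => h.2⟩ ⟨hz, hxz⟩

lemma flF_eq_self (hx : x ∈ F) : flF F x = x :=
  le_antisymm (csSup_le (s := F ∩ Iic x) ⟨x, hx, self_mem_Iic⟩ fun _ h => h.2) (le_flF hx le_rfl)

lemma ceF_eq_self (hx : x ∈ F) : ceF F x = x :=
  (ceF_le hx le_rfl).antisymm (le_csInf (s := F ∩ Ici x) ⟨x, hx, self_mem_Ici⟩ fun _ h => h.2)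

lemma flF_mono (hbelow : ∀ x, ∃ z ∈ F, z ≤ x) : Monotone (flF F) := fun _ y hxy =>
  csSup_le_csSup ⟨y, fun _ h => h.2⟩ (hbelow _) (inter_subset_inter_right _ (Iic_subset_Iic.2 hxy))

lemma ceF_mono (habove : ∀ x, ∃ z ∈ F, x ≤ z) : Monotone (ceF F) := fun x _ hxy =>
  csInf_le_csInf ⟨x, fun _ h => h.2⟩ (habove _) (inter_subset_inter_right _ (Ici_subset_Ici.2 hxy))

lemma flF_eq_of_mem_Ioo (hF : IsClosed F) (hb : ∃ z ∈ F, z ≤ x)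
    (hy : y ∈ Ioo (flF F x) (ceF F x)) : flF F y = flF F x := by
  have hyF : ∃ z ∈ F, z ≤ y := ⟨_, (flF_mem hF hb).1, hy.1.le⟩
  have hxy : flF F y ≤ x := by
    by_contra! h
    exact (ceF_le (flF_mem hF hyF).1 h.le).not_gt ((flF_mem hF hyF).2.trans_lt hy.2)
  exact (le_flF (flF_mem hF hyF).1 hxy).antisymm (le_flF (flF_mem hF hb).1 hy.1.le)

lemma ceF_eq_of_mem_Ioo (hF : IsClosed F) (ha : ∃ z ∈ F, x ≤ z)
    (hy : y ∈ Ioo (flF F x) (ceF F x)) : ceF F y = ceF F x := by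
  have hyF : ∃ z ∈ F, y ≤ z := ⟨_, (ceF_mem hF ha).1, hy.2.le⟩
  have hxy : x ≤ ceF F y := by
    by_contra! h
    exact (le_flF (ceF_mem hF hyF).1 h.le).not_gt (hy.1.trans_le (ceF_mem hF hyF).2)
  exact (ceF_le (ceF_mem hF ha).1 hy.2.le).antisymm (ceF_le (ceF_mem hF hyF).1 hxy)

lemma infDist_eq_min (hF : IsClosed F) (hb : ∃ z ∈ F, z ≤ x) (ha : ∃ z ∈ F, x ≤ z) :
    infDist x F = min (x - flF F x) (ceF F x - x) := by
  obtain ⟨hflF, hflx⟩ := flF_mem hF hb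
  obtain ⟨hceF, hcex⟩ := ceF_mem hF ha
  refine le_antisymm (le_min ?_ ?_) ((le_infDist ⟨_, hflF⟩).2 fun z hz => ?_)
  · simpa [Real.dist_eq, abs_of_nonneg (sub_nonneg.2 (mem_Iic.1 hflx))]
      using infDist_le_dist_of_mem (x := x) hflF
  · simpa [Real.dist_eq, abs_of_nonpos (sub_nonpos.2 (mem_Ici.1 hcex))]
      using infDist_le_dist_of_mem (x := x) hceF
  rcases le_total z x with h | h
  · have := le_flF hz h
    rw [Real.dist_eq, abs_of_nonneg (by linarith)]
    exact (min_le_left _ _).trans (by linarith)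
  · have := ceF_le hz h
    rw [Real.dist_eq, abs_of_nonpos (by linarith)]
    exact (min_le_right _ _).trans (by linarith)

lemma infDist_eq_min_of_mem_Ioo (hF : IsClosed F) (hb : ∃ z ∈ F, z ≤ x) (ha : ∃ z ∈ F, x ≤ z)
    (hy : y ∈ Ioo (flF F x) (ceF F x)) :
    infDist y F = min (y - flF F x) (ceF F x - y) := by
  rw [infDist_eq_min hF ⟨_, (flF_mem hF hb).1, hy.1.le⟩ ⟨_, (ceF_mem hF ha).1, hy.2.le⟩,
    flF_eq_of_mem_Ioo hF hb hy, ceF_eq_of_mem_Ioo hF ha hy]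

lemma infDist_le_half_gap (hF : IsClosed F) (hb : ∃ z ∈ F, z ≤ x) (ha : ∃ z ∈ F, x ≤ z) :
    infDist x F ≤ (ceF F x - flF F x) / 2 := by
  rw [infDist_eq_min hF hb ha]
  linarith [min_le_left (x - flF F x) (ceF F x - x), min_le_right (x - flF F x) (ceF F x - x)]

noncomputable def roundTiesUp (F : Set ℝ) (x : ℝ) : ℝ :=
  if x - flF F x < ceF F x - x then flF F x else ceF F x

lemma measurable_roundTiesUp (hbelow : ∀ x, ∃ z ∈ F, z ≤ x) (habove : ∀ x, ∃ z ∈ F, x ≤ z) :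
    Measurable (roundTiesUp F) := by
  have hfl := (flF_mono hbelow).measurable
  have hce := (ceF_mono habove).measurable
  exact Measurable.ite (measurableSet_lt (measurable_id.sub hfl) (hce.sub measurable_id)) hfl hce

lemma abs_roundTiesUp_sub (hF : IsClosed F) (hb : ∃ z ∈ F, z ≤ x) (ha : ∃ z ∈ F, x ≤ z) :
    |roundTiesUp F x - x| = infDist x F := by
  have hfl : flF F x ≤ x := (flF_mem hF hb).2
  have hce : x ≤ ceF F x := (ceF_mem hF ha).2
  rw [infDist_eq_min hF hb ha, roundTiesUp]
  split_ifs with h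
  · rw [abs_of_nonpos (by linarith), min_eq_left h.le, neg_sub]
  · rw [abs_of_nonneg (by linarith), min_eq_right (not_lt.1 h)]

lemma countable_setOf_gap_midpoint (hF : IsClosed F) (hbelow : ∀ x, ∃ z ∈ F, z ≤ x)
    (habove : ∀ x, ∃ z ∈ F, x ≤ z) :
    {x | flF F x < ceF F x ∧ x - flF F x = ceF F x - x}.Countable := by
  refine PairwiseDisjoint.countable_of_isOpen (s := fun m => Ioo (flF F m) (ceF F m))
    (fun m₁ h₁ m₂ h₂ hne => disjoint_left.2 fun y hy₁ hy₂ => hne ?_) (fun _ _ => isOpen_Ioo)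
    fun m hm => ⟨m, by linarith [hm.1, hm.2], by linarith [hm.1, hm.2]⟩
  -- two gaps sharing a point are the same gap, with the same midpoint
  have e₁ := flF_eq_of_mem_Ioo hF (hbelow m₁) hy₁
  have e₂ := flF_eq_of_mem_Ioo hF (hbelow m₂) hy₂
  have e₃ := ceF_eq_of_mem_Ioo hF (habove m₁) hy₁
  have e₄ := ceF_eq_of_mem_Ioo hF (habove m₂) hy₂
  linarith [h₁.2, h₂.2]

lemma eq_ite_of_abs_sub_eq_min {a b r : ℝ} (hax : a ≤ x) (hxb : x ≤ b) (hr : r = a ∨ r = b)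
    (hnear : |r - x| = min (x - a) (b - x)) (htie : ¬(a < b ∧ x - a = b - x)) :
    r = if x - a < b - x then a else b := by
  rcases hr with rfl | rfl <;> split_ifs with h
  · rfl
  · rw [abs_of_nonpos (by linarith), min_eq_right (not_lt.1 h)] at hnear
    by_contra hab
    exact htie ⟨(hax.trans hxb).lt_of_ne hab, by linarith⟩
  · rw [abs_of_nonneg (by linarith), min_eq_left h.le] at hnear
    linarith
  · rfl

lemma ae_eq_roundTiesUp (hF : IsClosed F) (hbelow : ∀ x, ∃ z ∈ F, z ≤ x)
    (habove : ∀ x, ∃ z ∈ F, x ≤ z) {rd : ℝ → ℝ} (hrd_mem : ∀ x, rd x = flF F x ∨ rd x = ceF F x)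
    (hrd_near : ∀ x, |rd x - x| = min (x - flF F x) (ceF F x - x)) :
    rd =ᵐ[volume] roundTiesUp F := by
  filter_upwards [(countable_setOf_gap_midpoint hF hbelow habove).ae_notMem volume] with x hx
  exact eq_ite_of_abs_sub_eq_min (flF_mem hF (hbelow x)).2 (ceF_mem hF (habove x)).2
    (hrd_mem x) (hrd_near x) hx

lemma hasDerivWithinAt_neg_infDist_pow_div (hF : IsClosed F) (hb : ∃ z ∈ F, z ≤ x)
    (ha : ∃ z ∈ F, x ≤ z) (hk : Odd k) :
    HasDerivWithinAt (fun y => -infDist y F ^ (k + 1) / (k + 1)) ((roundTiesUp F x - x) ^ k)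
      (Ioi x) x := by
  by_cases hx : x ∈ F
  · have hd := (hasFDerivAt_infDist_pow_of_mem hx (Nat.lt_add_of_pos_left hk.pos)).hasDerivAt
    rw [roundTiesUp, flF_eq_self hx, ceF_eq_self hx, ite_self, sub_self, zero_pow hk.pos.ne']
    simpa using (hd.neg.div_const ((k : ℝ) + 1)).hasDerivWithinAt
  · have hgap : x ∈ Ioo (flF F x) (ceF F x) :=
      ⟨(flF_mem hF hb).2.lt_of_ne fun h => hx (h ▸ (flF_mem hF hb).1),
        (ceF_mem hF ha).2.lt_of_ne' fun h => hx (h ▸ (ceF_mem hF ha).1)⟩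
    refine (hasDerivWithinAt_neg_min_pow_div hk).congr_of_eventuallyEq ?_
      (by rw [infDist_eq_min_of_mem_Ioo hF hb ha hgap])
    filter_upwards [nhdsWithin_le_nhds (isOpen_Ioo.mem_nhds hgap)] with y hy
    rw [infDist_eq_min_of_mem_Ioo hF hb ha hy]

lemma integral_Ioo_roundTiesUp_sub_pow (hF : IsClosed F) (hbelow : ∀ x, ∃ z ∈ F, z ≤ x)
    (habove : ∀ x, ∃ z ∈ F, x ≤ z) (hk : Odd k) {α β : ℝ} (hαβ : α ≤ β) :
    ∫ x in Ioo α β, (roundTiesUp F x - x) ^ k =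
      -infDist β F ^ (k + 1) / (k + 1) - -infDist α F ^ (k + 1) / (k + 1) := by
  have hint : IntervalIntegrable (fun x => (roundTiesUp F x - x) ^ k) volume α β := by
    refine ((continuous_infDist_pt F).pow k).intervalIntegrable α β |>.mono_fun
      (((measurable_roundTiesUp hbelow habove).sub measurable_id).pow_const k).aestronglyMeasurable
      (Eventually.of_forall fun x => ?_)
    simp [abs_roundTiesUp_sub hF (hbelow x) (habove x), abs_of_nonneg infDist_nonneg]
  rw [← integral_Ioc_eq_integral_Ioo, ← intervalIntegral.integral_of_le hαβ]
  exact intervalIntegral.integral_eq_sub_of_hasDeriv_right_of_le hαβ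
    (by fun_prop) (fun x _ => hasDerivWithinAt_neg_infDist_pow_div hF (hbelow x) (habove x) hk) hint

lemma abs_integral_Ioo_roundTiesUp_sub_pow_le (hF : IsClosed F) (hbelow : ∀ x, ∃ z ∈ F, z ≤ x)
    (habove : ∀ x, ∃ z ∈ F, x ≤ z) (hk : Odd k) {δ : ℝ} (hδ : ∀ x, infDist x F ≤ δ)
    {α β : ℝ} (hαβ : α ≤ β) :
    |∫ x in Ioo α β, (roundTiesUp F x - x) ^ k| ≤ δ ^ (k + 1) / (k + 1) := by
  rw [integral_Ioo_roundTiesUp_sub_pow hF hbelow habove hk hαβ, neg_div, neg_div, neg_sub_neg,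
    ← sub_div, abs_div, abs_of_pos (by positivity : (0 : ℝ) < k + 1)]
  gcongr
  exact abs_sub_le_of_nonneg_of_le (pow_nonneg infDist_nonneg _)
    (pow_le_pow_left₀ infDist_nonneg (hδ α) _) (pow_nonneg infDist_nonneg _)
    (pow_le_pow_left₀ infDist_nonneg (hδ β) _)

end Rounding

lemma exists_Ioo_eq_of_isOpen_of_ordConnected {S : Set ℝ} (hS : IsOpen S) (hc : S.OrdConnected)
    (hfin : volume S ≠ ⊤) : ∃ α β, α ≤ β ∧ S = Ioo α β := by
  rcases S.eq_empty_or_nonempty with rfl | ⟨x₀, hx₀⟩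
  · exact ⟨0, 0, le_rfl, (Ioo_self 0).symm⟩
  have hbddAbove : BddAbove S := by
    by_contra h
    refine hfin (measure_mono_top (fun y (hy : x₀ ≤ y) => ?_) Real.volume_Ici)
    obtain ⟨b, hb, hyb⟩ := not_bddAbove_iff.1 h y
    exact hc.out hx₀ hb ⟨hy, hyb.le⟩
  have hbddBelow : BddBelow S := by
    by_contra h
    refine hfin (measure_mono_top (fun y (hy : y ≤ x₀) => ?_) Real.volume_Iic)
    obtain ⟨a, ha, hay⟩ := not_bddBelow_iff.1 h y
    exact hc.out ha hx₀ ⟨hay.le, hy⟩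
  refine ⟨sInf S, sSup S, csInf_le_csSup ⟨x₀, hx₀⟩ hbddBelow hbddAbove, ?_⟩
  refine ((interior_maximal (subset_Icc_csInf_csSup hbddBelow hbddAbove) hS).trans
    interior_Icc.subset).antisymm ?_
  exact IsConnected.Ioo_csInf_csSup_subset ⟨⟨x₀, hx₀⟩, hc.isPreconnected⟩ hbddBelow hbddAbove

lemma integral_mul_eq_integral_setIntegral_setOf_lt {α : Type*} [MeasurableSpace α]
    {μ : Measure α} [SFinite μ] {f g : α → ℝ} (hf0 : ∀ x, 0 ≤ f x) (hf : Measurable f)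
    (hg : Measurable g) (hfg : Integrable (fun x => f x * g x) μ) :
    ∫ x, f x * g x ∂μ = ∫ u in Ioi 0, ∫ x in {x | u < f x}, g x ∂μ := by
  set Φ : α → ℝ → ℝ := fun x => (Ioo 0 (f x)).indicator fun _ => g x
  have hslice : ∀ x c, ∫ u, (Ioo 0 (f x)).indicator (fun _ => c) u = f x * c := fun x c => by
    rw [integral_indicator_const _ measurableSet_Ioo, Real.volume_real_Ioo_of_le (hf0 x), sub_zero,
      smul_eq_mul]
  have hΦ : Integrable (Function.uncurry Φ) (μ.prod volume) := by
    have hA : MeasurableSet {p : α × ℝ | p.2 ∈ Ioo 0 (f p.1)} :=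
      (measurableSet_lt measurable_const measurable_snd).inter
        (measurableSet_lt measurable_snd (hf.comp measurable_fst))
    have hm : Measurable (Function.uncurry Φ) := (hg.comp measurable_fst).indicator hA
    refine (integrable_prod_iff hm.aestronglyMeasurable).2 ⟨Eventually.of_forall fun x => ?_, ?_⟩
    · show Integrable ((Ioo 0 (f x)).indicator fun _ => g x)
      exact (integrable_indicator_iff measurableSet_Ioo).2
        (integrableOn_const measure_Ioo_lt_top.ne)
    · refine hfg.norm.congr (Eventually.of_forall fun x => ?_)
      simp only [Φ, Function.uncurry_apply_pair, norm_indicator_eq_indicator_norm, hslice, norm_mul,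
        Real.norm_of_nonneg (hf0 x)]
  calc ∫ x, f x * g x ∂μ = ∫ x, (∫ u, Φ x u) ∂μ := by simp only [Φ, hslice]
    _ = ∫ u, ∫ x, Φ x u ∂μ := integral_integral_swap hΦ
    _ = ∫ u in Ioi 0, ∫ x in {x | u < f x}, g x ∂μ := by
      rw [← integral_indicator measurableSet_Ioi]
      congr 1 with u
      by_cases hu : 0 < u
      · rw [indicator_of_mem (show u ∈ Ioi 0 from hu),
          ← integral_indicator (measurableSet_lt measurable_const hf)]
        congr 1 with x
        simp [Φ, indicator, hu]
      · simp [Φ, indicator, hu]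

lemma abs_integral_mul_le_of_unimodal {f g : ℝ → ℝ} {x₀ C : ℝ} (hf0 : ∀ x, 0 ≤ f x)
    (hf : LowerSemicontinuous f) (hfi : Integrable f) (hmono : MonotoneOn f (Iic x₀))
    (hanti : AntitoneOn f (Ici x₀)) (hg : Measurable g) (hfg : Integrable (fun x => f x * g x))
    (hC : ∀ α β, α ≤ β → |∫ x in Ioo α β, g x| ≤ C) :
    |∫ x, f x * g x| ≤ f x₀ * C := by
  have hmax : ∀ x, f x ≤ f x₀ := fun x => (le_total x x₀).elim
    (fun h => hmono h self_mem_Iic h) (fun h => hanti self_mem_Ici h h)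
  have hlevel : ∀ u ∈ Ioc 0 (f x₀), ‖∫ x in {x | u < f x}, g x‖ ≤ C := by
    intro u hu
    have hc : {x | u < f x}.OrdConnected := ⟨fun a ha b hb y hy => (le_total y x₀).elim
      (fun h => ha.trans_le (hmono (hy.1.trans h) h hy.1))
      (fun h => hb.trans_le (hanti h (h.trans hy.2) hy.2))⟩
    have hfin : volume {x | u < f x} ≠ ⊤ :=
      ne_top_of_le_ne_top (hfi.measure_ge_lt_top hu.1).ne
        (measure_mono fun _ hx => (show u < _ from hx).le)
    obtain ⟨α, β, hαβ, hS⟩ := exists_Ioo_eq_of_isOpen_of_ordConnected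
      (S := {x | u < f x}) (hf.isOpen_preimage u) hc hfin
    rw [hS, Real.norm_eq_abs]
    exact hC α β hαβ
  have hvanish : ∀ u ∈ Ioi 0 \ Ioc 0 (f x₀), ∫ x in {x | u < f x}, g x = 0 := fun u hu => by
    have : {x | u < f x} = ∅ := eq_empty_of_forall_notMem fun x hx =>
      hu.2 ⟨hu.1, (hx.out.trans_le (hmax x)).le⟩
    rw [this, Measure.restrict_empty, integral_zero_measure]
  rw [integral_mul_eq_integral_setIntegral_setOf_lt hf0 hf.measurable hg hfg,
    setIntegral_eq_of_subset_of_forall_sdiff_eq_zero measurableSet_Ioi Ioc_subset_Ioi_self hvanish,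
    ← Real.norm_eq_abs]
  calc _ ≤ C * volume.real (Ioc 0 (f x₀)) :=
        norm_setIntegral_le_of_norm_le_const measure_Ioc_lt_top hlevel
    _ = f x₀ * C := by rw [Real.volume_real_Ioc_of_le (hf0 x₀), sub_zero, mul_comm]

theorem unimodal_error_int_odd_general
    (F : Set ℝ) (hF_closed : IsClosed F)
    (hF_below : ∀ x : ℝ, ∃ z ∈ F, z ≤ x) (hF_above : ∀ x : ℝ, ∃ z ∈ F, x ≤ z)
    (rd : ℝ → ℝ)
    (hrd_mem : ∀ x : ℝ, rd x = flF F x ∨ rd x = ceF F x)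
    (hrd_near : ∀ x : ℝ, |rd x - x| = min (x - flF F x) (ceF F x - x))
    (δ : ℝ) (hgap : ∀ x : ℝ, ceF F x - flF F x ≤ 2 * δ)
    (f : ℝ → ℝ) (hf_nonneg : ∀ x, 0 ≤ f x) (hf_lsc : LowerSemicontinuous f)
    (hf_int : Integrable f)
    (xstar : ℝ) (hf_mono : MonotoneOn f (Set.Iic xstar))
    (hf_anti : AntitoneOn f (Set.Ici xstar))
    (k : ℕ) (hodd : Odd k) :
    |∫ x, f x * (rd x - x) ^ k| ≤ (1 / (k + 1)) * f xstar * δ ^ (k + 1) := by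
  have hdist : ∀ x, infDist x F ≤ δ := fun x => by
    linarith [infDist_le_half_gap hF_closed (hF_below x) (hF_above x), hgap x]
  have hg : Measurable fun x => (roundTiesUp F x - x) ^ k :=
    ((measurable_roundTiesUp hF_below hF_above).sub measurable_id).pow_const k
  have hg_bdd : ∀ x, ‖(roundTiesUp F x - x) ^ k‖ ≤ δ ^ k := fun x => by
    rw [norm_pow, Real.norm_eq_abs, abs_roundTiesUp_sub hF_closed (hF_below x) (hF_above x)]
    exact pow_le_pow_left₀ infDist_nonneg (hdist x) k
  have hrd : ∫ x, f x * (rd x - x) ^ k = ∫ x, f x * (roundTiesUp F x - x) ^ k :=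
    integral_congr_ae <| (ae_eq_roundTiesUp hF_closed hF_below hF_above hrd_mem hrd_near).mono
      fun x hx => by simp only [hx]
  calc |∫ x, f x * (rd x - x) ^ k| ≤ f xstar * (δ ^ (k + 1) / (k + 1)) := by
        rw [hrd]
        exact abs_integral_mul_le_of_unimodal hf_nonneg hf_lsc hf_int hf_mono hf_anti hg
          (hf_int.mul_bdd hg.aestronglyMeasurable (Eventually.of_forall hg_bdd))
          fun α β => abs_integral_Ioo_roundTiesUp_sub_pow_le hF_closed hF_below hF_above hodd hdist
    _ = (1 / (k + 1)) * f xstar * δ ^ (k + 1) := by ring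

theorem unimodal_error_int_odd
    (F : Set ℝ) (hF_closed : IsClosed F) (hF_ne : F.Nonempty)
    (hF_below : ∀ x : ℝ, ∃ z ∈ F, z ≤ x) (hF_above : ∀ x : ℝ, ∃ z ∈ F, x ≤ z)
    (rd : ℝ → ℝ) (hrd_meas : Measurable rd)
    (hrd_mem : ∀ x : ℝ, rd x = flF F x ∨ rd x = ceF F x)
    (hrd_near : ∀ x : ℝ, |rd x - x| = min (x - flF F x) (ceF F x - x))
    (δ : ℝ) (hδ : 0 < δ) (hgap : ∀ x : ℝ, ceF F x - flF F x ≤ 2 * δ)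
    (f : ℝ → ℝ) (hf_nonneg : ∀ x, 0 ≤ f x) (hf_lsc : LowerSemicontinuous f)
    (hf_int : Integrable f)
    (xstar : ℝ) (hf_mono : MonotoneOn f (Set.Iic xstar))
    (hf_anti : AntitoneOn f (Set.Ici xstar))
    (k : ℕ) (hk : 1 ≤ k) (hodd : Odd k) :
    |∫ x, f x * (rd x - x) ^ k| ≤ (1 / (k + 1)) * f xstar * δ ^ (k + 1) :=
  unimodal_error_int_odd_general F hF_closed hF_below hF_above rd hrd_mem hrd_near δ hgap f
    hf_nonneg hf_lsc hf_int xstar hf_mono hf_anti k hodd
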